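/- Let A be a Noetherian local ring and I₁, I₂ two ideals primary for the maximal ideal of A with the same integral closure Ī₁ = Ī₂. Then I₁ and I₂ have the same Hilbert–Samuel multiplicity. -/

import Mathlib

open Filter ENNReal

/-- `f` is integral over the ideal `I`: there is an equation
`f^k + a₁ f^(k-1) + ⋯ + a_k = 0` with `aᵢ ∈ Iⁱ` (and `k ≥ 1`). -/
def IsIntegralOverIdeal {A : Type*} [CommRing A] (I : Ideal A) (f : A) : Prop :=
  ∃ (k : ℕ) (a : ℕ → A), 0 < k ∧ (∀ i ∈ Finset.Icc 1 k, a i ∈ I ^ i) ∧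
    f ^ k + ∑ i ∈ Finset.Icc 1 k, a i * f ^ (k - i) = 0

/-- The length of an `A`-module `M` (the supremum of lengths of strictly increasing
chains of submodules), as an extended nonnegative real. -/
noncomputable def moduleLength (A M : Type*) [CommRing A] [AddCommGroup M] [Module A M] :
    ℝ≥0∞ :=
  ⨆ p : LTSeries (Submodule A M), (p.length : ℝ≥0∞)

/-- The Hilbert–Samuel multiplicity of an ideal `I` in a `d`-dimensional Noetherian
local ring: `e(I) = lim_{n→∞} d! · ℓ(A/Iⁿ)/n^d` (the limit exists; we use `limsup`). -/
noncomputable def hilbertSamuelMult {A : Type*} [CommRing A] (I : Ideal A) (d : ℕ) :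
    ℝ≥0∞ :=
  Filter.atTop.limsup fun n : ℕ =>
    (Nat.factorial d : ℝ≥0∞) * moduleLength A (A ⧸ I ^ n) / (n : ℝ≥0∞) ^ d

/-!
If every element of `J` is integral over `I`, then `I` is a reduction of `I + J`. For a single
element `f`, the integral equation puts `f^(m+1)` in `I (I + (f))^m`, hence
`(I + (f))^(m+1) = I (I + (f))^m` and `(I + (f))^(n+m) ⊆ Iⁿ`; the generators of `J` are
adjoined one at a time. Then `ℓ(A/Iⁿ) ≤ ℓ(A/(I+J)^(n+k))`, and as `(n+k)^d / n^d → 1`, the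
normalized lengths of `I` and `I + J` have the same limsup. Apply this to `I₁ ⊆ I₁ + I₂ ⊇ I₂`.
-/

open Topology

namespace ENNReal

lemma limsup_mul_le_of_tendsto_one {α : Type*} {f : Filter α} [f.NeBot] {u v : α → ℝ≥0∞}
    (hv : Tendsto v f (𝓝 1)) : limsup (u * v) f ≤ limsup u f := by
  have hlim : limsup v f = 1 := hv.limsup_eq
  calc limsup (u * v) f ≤ limsup u f * limsup v f :=
        limsup_mul_le' (Or.inr (by simp [hlim])) (Or.inr (by simp [hlim]))
    _ = limsup u f := by rw [hlim, mul_one]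

lemma tendsto_nat_add_div_nat_pow (k d : ℕ) :
    Tendsto (fun n : ℕ => (((n : ℝ≥0∞) + k) / n) ^ d) atTop (𝓝 1) := by
  have hdiv : Tendsto (fun n : ℕ => 1 + (k : ℝ≥0∞) / n) atTop (𝓝 1) := by
    simpa using tendsto_const_nhds.add
      (ENNReal.Tendsto.const_div tendsto_nat_nhds_top (Or.inr (natCast_ne_top k)))
  have heq : (fun n : ℕ => 1 + (k : ℝ≥0∞) / n) =ᶠ[atTop] fun n : ℕ => ((n : ℝ≥0∞) + k) / n := by
    filter_upwards [eventually_ne_atTop 0] with n hn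
    rw [ENNReal.add_div, ENNReal.div_self (Nat.cast_ne_zero.2 hn) (natCast_ne_top n)]
  simpa using ENNReal.Tendsto.pow (n := d) (hdiv.congr' heq)

lemma div_pow_eq_div_pow_mul_div_pow {a c : ℝ≥0∞} (b : ℝ≥0∞) (h0 : c ≠ 0) (ht : c ≠ ⊤) (d : ℕ) :
    a / b ^ d = a / c ^ d * (c / b) ^ d := by
  rw [div_eq_mul_inv c, mul_pow, ← ENNReal.inv_pow, ← mul_assoc,
    ENNReal.div_mul_cancel (pow_ne_zero _ h0) (pow_ne_top ht), div_eq_mul_inv]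

end ENNReal

lemma moduleLength_le_of_surjective {A M N : Type*} [CommRing A] [AddCommGroup M] [Module A M]
    [AddCommGroup N] [Module A N] (f : N →ₗ[A] M) (hf : Function.Surjective f) :
    moduleLength A M ≤ moduleLength A N :=
  iSup_le fun p => le_iSup_of_le (p.map _ (Submodule.comap_strictMono_of_surjective hf)) (by simp)

section

variable {A : Type*} [CommRing A]

lemma moduleLength_quotient_anti {P Q : Ideal A} (h : P ≤ Q) :
    moduleLength A (A ⧸ Q) ≤ moduleLength A (A ⧸ P) :=
  moduleLength_le_of_surjective _ (Submodule.factor_surjective h)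

namespace Ideal

lemma sup_span_singleton_pow_succ_le (I : Ideal A) (f : A) (m : ℕ) :
    (I ⊔ span {f}) ^ (m + 1) ≤ I * (I ⊔ span {f}) ^ m ⊔ span {f ^ (m + 1)} := by
  set J := I ⊔ span {f}
  induction m with
  | zero => simp [J]
  | succ m ih =>
    have hfJ : f ^ (m + 1) ∈ J ^ (m + 1) :=
      pow_mem_pow (mem_sup_right (mem_span_singleton_self f)) _
    calc J ^ (m + 2) = J * J ^ (m + 1) := pow_succ' _ _
      _ ≤ J * (I * J ^ m ⊔ span {f ^ (m + 1)}) := mul_mono_right ih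
      _ = I * J ^ (m + 1) ⊔ J * span {f ^ (m + 1)} := by rw [mul_sup, mul_left_comm, ← pow_succ']
      _ ≤ I * J ^ (m + 1) ⊔ span {f ^ (m + 2)} := by
        refine sup_le le_sup_left ?_
        rw [sup_mul, span_singleton_mul_span_singleton, ← pow_succ']
        exact sup_le_sup_right (mul_mono_right ((span_singleton_le_iff_mem _).2 hfJ)) _

lemma pow_add_le_pow_mul_pow {I J : Ideal A} {m : ℕ} (h : J ^ (m + 1) ≤ I * J ^ m) (n : ℕ) :
    J ^ (n + m) ≤ I ^ n * J ^ m := by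
  induction n with
  | zero => simp
  | succ n ih =>
    calc J ^ (n + 1 + m) = J ^ n * J ^ (m + 1) := by rw [← pow_add]; ring_nf
      _ ≤ J ^ n * (I * J ^ m) := mul_mono_right h
      _ = I * J ^ (n + m) := by rw [pow_add]; ring
      _ ≤ I * (I ^ n * J ^ m) := mul_mono_right ih
      _ = I ^ (n + 1) * J ^ m := by ring

end Ideal

namespace IsIntegralOverIdeal

lemma of_mem {I : Ideal A} {f : A} (hf : f ∈ I) : IsIntegralOverIdeal I f := by
  refine ⟨1, fun _ => -f, one_pos, fun i hi => ?_, by simp⟩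
  obtain rfl : i = 1 := by simpa using hi
  simpa using I.neg_mem hf

lemma mono {I J : Ideal A} (h : I ≤ J) {f : A} (hf : IsIntegralOverIdeal I f) :
    IsIntegralOverIdeal J f := by
  obtain ⟨k, a, hk, ha, heq⟩ := hf
  exact ⟨k, a, hk, fun i hi => Ideal.pow_right_mono h i (ha i hi), heq⟩

lemma exists_pow_succ_mem_mul_pow {I J : Ideal A} {f : A} (hf : IsIntegralOverIdeal I f)
    (hIJ : I ≤ J) (hfJ : f ∈ J) : ∃ m, f ^ (m + 1) ∈ I * J ^ m := by
  obtain ⟨k, a, hk, ha, heq⟩ := hf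
  refine ⟨k - 1, ?_⟩
  rw [Nat.sub_add_cancel hk, eq_neg_of_add_eq_zero_left heq]
  refine neg_mem (Submodule.sum_mem _ fun i hi => ?_)
  have hik := Finset.mem_Icc.1 hi
  obtain ⟨j, rfl⟩ : ∃ j, i = j + 1 := ⟨i - 1, by omega⟩
  have hexp : I * J ^ j * J ^ (k - (j + 1)) = I * J ^ (k - 1) := by
    rw [mul_assoc, ← pow_add]
    congr 2
    omega
  have hai : a (j + 1) ∈ I * J ^ j := by
    have := ha _ hi
    rw [pow_succ'] at this
    exact Ideal.mul_mono_right (Ideal.pow_right_mono hIJ j) this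
  exact hexp ▸ Ideal.mul_mem_mul hai (Ideal.pow_mem_pow hfJ _)

lemma exists_sup_span_pow_add_le {I : Ideal A} {f : A} (hf : IsIntegralOverIdeal I f) :
    ∃ k, ∀ n, (I ⊔ Ideal.span {f}) ^ (n + k) ≤ I ^ n := by
  obtain ⟨m, hm⟩ := hf.exists_pow_succ_mem_mul_pow le_sup_left
    (Ideal.mem_sup_right (Ideal.mem_span_singleton_self f))
  have hred : (I ⊔ Ideal.span {f}) ^ (m + 1) ≤ I * (I ⊔ Ideal.span {f}) ^ m :=
    (Ideal.sup_span_singleton_pow_succ_le I f m).trans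
      (sup_le le_rfl ((Ideal.span_singleton_le_iff_mem _).2 hm))
  exact ⟨m, fun n => (Ideal.pow_add_le_pow_mul_pow hred n).trans Ideal.mul_le_left⟩

end IsIntegralOverIdeal

lemma exists_sup_pow_add_le_of_forall_isIntegralOverIdeal {J : Ideal A} (hJ : J.FG) :
    ∀ {I : Ideal A}, (∀ f ∈ J, IsIntegralOverIdeal I f) → ∃ k, ∀ n, (I ⊔ J) ^ (n + k) ≤ I ^ n := by
  induction J, hJ using Submodule.fg_induction with
  | singleton f =>
    exact fun h => (h f (Submodule.mem_span_singleton_self f)).exists_sup_span_pow_add_le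
  | sup J₁ J₂ _ _ ih₁ ih₂ =>
    intro I h
    obtain ⟨k₁, hk₁⟩ := ih₁ fun f hf => h f (Ideal.mem_sup_left hf)
    obtain ⟨k₂, hk₂⟩ := ih₂ (I := I ⊔ J₁) fun f hf =>
      (h f (Ideal.mem_sup_right hf)).mono le_sup_left
    refine ⟨k₁ + k₂, fun n => ?_⟩
    rw [← sup_assoc, ← add_assoc]
    exact (hk₂ (n + k₁)).trans (hk₁ n)

lemma hilbertSamuelMult_anti {I J : Ideal A} (h : I ≤ J) (d : ℕ) :
    hilbertSamuelMult J d ≤ hilbertSamuelMult I d :=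
  limsup_le_limsup (Eventually.of_forall fun n => ENNReal.div_le_div_right
    (mul_le_mul_right (moduleLength_quotient_anti (Ideal.pow_right_mono h n)) _) _)

lemma hilbertSamuelMult_le_of_pow_add_le {I J : Ideal A} {k : ℕ} (h : ∀ n, J ^ (n + k) ≤ I ^ n)
    (d : ℕ) : hilbertSamuelMult I d ≤ hilbertSamuelMult J d := by
  set g : ℕ → ℝ≥0∞ := fun n => (Nat.factorial d : ℝ≥0∞) * moduleLength A (A ⧸ J ^ n)
  have hshift : (fun n : ℕ => g (n + k) / (n : ℝ≥0∞) ^ d) =ᶠ[atTop]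
      (fun n : ℕ => g (n + k) / ((n + k : ℕ) : ℝ≥0∞) ^ d) *
        fun n : ℕ => (((n : ℝ≥0∞) + k) / n) ^ d := by
    filter_upwards [eventually_ne_atTop 0] with n hn
    rw [Pi.mul_apply, Nat.cast_add]
    exact ENNReal.div_pow_eq_div_pow_mul_div_pow _ (by simp [hn]) (by simp) d
  calc hilbertSamuelMult I d ≤ limsup (fun n : ℕ => g (n + k) / (n : ℝ≥0∞) ^ d) atTop :=
        limsup_le_limsup (Eventually.of_forall fun n => ENNReal.div_le_div_right
          (mul_le_mul_right (moduleLength_quotient_anti (h n)) _) _)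
    _ ≤ limsup (fun n : ℕ => g (n + k) / ((n + k : ℕ) : ℝ≥0∞) ^ d) atTop := by
        rw [limsup_congr hshift]
        exact ENNReal.limsup_mul_le_of_tendsto_one (ENNReal.tendsto_nat_add_div_nat_pow k d)
    _ = hilbertSamuelMult J d := limsup_nat_add (fun n : ℕ => g n / (n : ℝ≥0∞) ^ d) k

lemma hilbertSamuelMult_sup_of_forall_isIntegralOverIdeal [IsNoetherianRing A] {I J : Ideal A}
    (h : ∀ f ∈ J, IsIntegralOverIdeal I f) (d : ℕ) :
    hilbertSamuelMult (I ⊔ J) d = hilbertSamuelMult I d := by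
  obtain ⟨k, hk⟩ := exists_sup_pow_add_le_of_forall_isIntegralOverIdeal
    (IsNoetherian.noetherian J) h
  exact le_antisymm (hilbertSamuelMult_anti le_sup_left d)
    (hilbertSamuelMult_le_of_pow_add_le hk d)

end

theorem hilbertSamuelMult_eq_of_integralClosure_eq_general {A : Type*} [CommRing A]
    [IsNoetherianRing A] (d : ℕ)
    (I₁ I₂ : Ideal A)
    (hcl : ∀ f : A, IsIntegralOverIdeal I₁ f ↔ IsIntegralOverIdeal I₂ f) :
    hilbertSamuelMult I₁ d = hilbertSamuelMult I₂ d :=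
  calc hilbertSamuelMult I₁ d
      = hilbertSamuelMult (I₁ ⊔ I₂) d := (hilbertSamuelMult_sup_of_forall_isIntegralOverIdeal
        (fun f hf => (hcl f).2 (.of_mem hf)) d).symm
    _ = hilbertSamuelMult (I₂ ⊔ I₁) d := by rw [sup_comm]
    _ = hilbertSamuelMult I₂ d := hilbertSamuelMult_sup_of_forall_isIntegralOverIdeal
        (fun f hf => (hcl f).1 (.of_mem hf)) d

/-- In a Noetherian local ring, two ideals primary for the maximal
ideal having the same integral closure have the same Hilbert–Samuel multiplicity. -/
theorem hilbertSamuelMult_eq_of_integralClosure_eq {A : Type*} [CommRing A]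
    [IsNoetherianRing A] [IsLocalRing A] (d : ℕ) (hd : ringKrullDim A = d)
    (I₁ I₂ : Ideal A) (h₁ : I₁ ≠ ⊤) (h₂ : I₂ ≠ ⊤)
    (hrad₁ : I₁.radical = IsLocalRing.maximalIdeal A)
    (hrad₂ : I₂.radical = IsLocalRing.maximalIdeal A)
    (hcl : ∀ f : A, IsIntegralOverIdeal I₁ f ↔ IsIntegralOverIdeal I₂ f) :
    hilbertSamuelMult I₁ d = hilbertSamuelMult I₂ d :=
  hilbertSamuelMult_eq_of_integralClosure_eq_general d I₁ I₂ hcl
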